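/- arXiv:0803.2065 — 2 statements merged into one kernel-verified Lean document; each statement's English description precedes it below -/
import Mathlib

section
/- Let A ∈ Z^{d×n} with ZA = Z^d, c ∈ R^n, and suppose c is generic in the sense that for every b ∈ NA the integer program min{c·x : Ax = b, x ∈ N^n} has a unique optimal solution. Then for every b ∈ cone(A) the linear program min{c·x : Ax = b, x ≥ 0} has a unique optimal solution, and consequently Δ_c is a triangulation: the columns indexed by every cell of Δ_c are linearly independent. -/
def feas {d n : ℕ} (A : Matrix (Fin d) (Fin n) ℤ) (b : Fin d → ℝ) (x : Fin n → ℝ) : Prop :=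
  (∀ j, 0 ≤ x j) ∧ ∀ i, ∑ j, (A i j : ℝ) * x j = b i

def lpOpt {d n : ℕ} (A : Matrix (Fin d) (Fin n) ℤ) (c : Fin n → ℝ) (b : Fin d → ℝ)
    (x : Fin n → ℝ) : Prop :=
  feas A b x ∧ ∀ y, feas A b y → ∑ j, c j * x j ≤ ∑ j, c j * y j

/-- u is an optimal solution of IP_{A,c}(b). -/
def intOpt {d n : ℕ} (A : Matrix (Fin d) (Fin n) ℤ) (c : Fin n → ℝ) (b : Fin d → ℤ)
    (u : Fin n → ℕ) : Prop :=
  (∀ i, ∑ j, A i j * (u j : ℤ) = b i) ∧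
    ∀ u' : Fin n → ℕ, (∀ i, ∑ j, A i j * (u' j : ℤ) = b i) →
      ∑ j, c j * (u j : ℝ) ≤ ∑ j, c j * (u' j : ℝ)

def isCell {d n : ℕ} (A : Matrix (Fin d) (Fin n) ℤ) (c : Fin n → ℝ) (σ : Finset (Fin n)) : Prop :=
  ∃ z : Fin d → ℝ, (∀ j ∈ σ, ∑ i, z i * (A i j : ℝ) = c j) ∧
    ∀ j ∉ σ, ∑ i, z i * (A i j : ℝ) < c j

/-!
Genericity makes the optimum of every fiber `{u ∈ ℕⁿ | A u = b}` strictly cheaper than every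
other point of that fiber. Comparing the two halves `v⁺`, `v⁻` of a nonzero integer kernel vector
`v` with the optimum of their common fiber produces an integer kernel vector `t` with `c ⬝ t < 0`
whose negative entries lie in the support of `v`. The real kernel of `A`, cut down to any support,
is spanned by integer vectors, so such a `t` exists for every nonzero real kernel vector `w`; it is
then an improving feasible direction at any LP-feasible point whose support contains that of `w`.
This rules out two distinct LP optima (take `w = x - y` at their midpoint) and a linear dependence
`w` among the columns of a cell (the cell's certificate `z` gives `c ⬝ t = (c - zA) ⬝ t ≥ 0`).
For existence, reducing supports shows `c ⬝ w > 0` for every nonzero `w ≥ 0` with `A w = 0`, and a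
compactness argument turns this into bounded sublevel sets of the LP.
-/

open Matrix

section IntegerKernel

variable {m n : Type*} [Fintype n]

theorem Matrix.map_intCast_mulVec_eq_zero {R : Type*} [Ring R] {M : Matrix m n ℤ} {v : n → ℤ}
    (h : M *ᵥ v = 0) : M.map (↑) *ᵥ (Int.cast ∘ v : n → R) = 0 := by
  ext i
  simpa [h] using ((Int.castRingHom R).map_mulVec M v i).symm

variable [Fintype m] [DecidableEq n]

theorem Matrix.exists_int_mulVec_eq_zero (M : Matrix m n ℤ) {w : n → ℝ} (hw : w ≠ 0)
    (hMw : M.map (↑) *ᵥ w = 0) : ∃ v : n → ℤ, v ≠ 0 ∧ M *ᵥ v = 0 := by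
  -- `Mᵀ M` is singular over `ℝ`, hence over `ℤ`, and `Mᵀ M v = 0` forces `‖M v‖² = 0`
  have hdet : (Mᵀ * M).det = 0 := by
    have : ((Int.castRingHom ℝ).mapMatrix (Mᵀ * M)).det = 0 :=
      exists_mulVec_eq_zero_iff.mp ⟨w, hw, by
        rw [RingHom.mapMatrix_apply, Matrix.map_mul, ← mulVec_mulVec]
        exact (congrArg _ hMw).trans (mulVec_zero _)⟩
    rwa [← RingHom.map_det, map_eq_zero_iff _ Int.cast_injective] at this
  obtain ⟨v, hv, hMv⟩ := exists_mulVec_eq_zero_iff.mpr hdet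
  refine ⟨v, hv, dotProduct_self_eq_zero.mp ?_⟩
  rw [← dotProduct_zero v, ← hMv, ← mulVec_mulVec, dotProduct_mulVec v Mᵀ, vecMul_transpose]

theorem Matrix.exists_int_mulVec_eq_zero_support_subset (M : Matrix m n ℤ) {w : n → ℝ}
    (hw : w ≠ 0) (hMw : M.map (↑) *ᵥ w = 0) :
    ∃ v : n → ℤ, v ≠ 0 ∧ M *ᵥ v = 0 ∧ Function.support v ⊆ Function.support w := by
  classical
  -- the extra rows force `v j = 0` wherever `w j = 0`
  let D : Matrix n n ℤ := diagonal fun j => if w j = 0 then 1 else 0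
  obtain ⟨v, hv, hMDv⟩ := (fromRows M D).exists_int_mulVec_eq_zero hw (by
    ext (i | j)
    · exact congrFun hMw i
    · by_cases h : w j = 0 <;> simp [D, fromRows_map, mulVec_diagonal, h])
  rw [fromRows_mulVec] at hMDv
  refine ⟨v, hv, funext fun i => congrFun hMDv (.inl i), fun j hvj hwj => hvj ?_⟩
  simpa [D, mulVec_diagonal, hwj] using congrFun hMDv (.inr j)

end IntegerKernel

section Ray

variable {ι : Type*} [Fintype ι]

theorem exists_pos_add_smul_nonneg_eq_zero {w u : ι → ℝ} (hw : 0 ≤ w)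
    (hu : ∀ j, u j < 0 → 0 < w j) (hneg : ∃ j, u j < 0) :
    ∃ ε : ℝ, 0 < ε ∧ 0 ≤ w + ε • u ∧ ∃ j, 0 < w j ∧ (w + ε • u) j = 0 := by
  classical
  obtain ⟨j₀, hj₀, hmin⟩ := Finset.exists_min_image (Finset.univ.filter fun j => u j < 0)
    (fun j => w j / -u j) (by simpa [Finset.filter_nonempty_iff] using hneg)
  rw [Finset.mem_filter_univ] at hj₀
  have hε : 0 < w j₀ / -u j₀ := div_pos (hu j₀ hj₀) (neg_pos.mpr hj₀)
  refine ⟨w j₀ / -u j₀, hε, fun j => ?_, j₀, hu j₀ hj₀, ?_⟩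
  · show 0 ≤ w j + w j₀ / -u j₀ * u j
    have hwj : 0 ≤ w j := hw j
    rcases lt_or_ge (u j) 0 with h | h
    · have := (le_div_iff₀ (neg_pos.mpr h)).mp (hmin j ((Finset.mem_filter_univ j).mpr h))
      linarith
    · nlinarith
  · show w j₀ + w j₀ / -u j₀ * u j₀ = 0
    field_simp [hj₀.ne]
    ring

theorem exists_pos_add_smul_nonneg {w u : ι → ℝ} (hw : 0 ≤ w) (hu : ∀ j, u j < 0 → 0 < w j) :
    ∃ ε : ℝ, 0 < ε ∧ 0 ≤ w + ε • u := by
  by_cases hneg : ∃ j, u j < 0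
  · obtain ⟨ε, hε, h, -⟩ := exists_pos_add_smul_nonneg_eq_zero hw hu hneg
    exact ⟨ε, hε, h⟩
  · exact ⟨1, one_pos, add_nonneg hw (by simpa [Pi.le_def] using hneg)⟩

theorem exists_pos_add_smul_nonneg_support_ssubset {w u : ι → ℝ} (hw : 0 ≤ w)
    (hu : Function.support u ⊆ Function.support w) (hneg : ∃ j, u j < 0) :
    ∃ ε : ℝ, 0 < ε ∧ 0 ≤ w + ε • u ∧ Function.support (w + ε • u) ⊂ Function.support w := by
  obtain ⟨ε, hε, hnn, j, hj, hj0⟩ :=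
    exists_pos_add_smul_nonneg_eq_zero hw (fun j h => (hw j).lt_of_ne' (hu h.ne)) hneg
  refine ⟨ε, hε, hnn, (Set.ssubset_iff_of_subset ?_).2 ⟨j, hj.ne', by simpa using hj0⟩⟩
  exact (Function.support_add _ _).trans
    (Set.union_subset subset_rfl ((Function.support_const_smul_subset _ _).trans hu))

end Ray

theorem exists_pos_mul_norm_le_max {m n : Type*} [Fintype m] [Fintype n] (B : Matrix m n ℝ)
    (c : n → ℝ) (hc : ∀ x, 0 ≤ x → x ≠ 0 → B *ᵥ x = 0 → 0 < c ⬝ᵥ x) :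
    ∃ μ : ℝ, 0 < μ ∧ ∀ x, 0 ≤ x → μ * ‖x‖ ≤ max ‖B *ᵥ x‖ (c ⬝ᵥ x) := by
  set f : (n → ℝ) → ℝ := fun x => max ‖B *ᵥ x‖ (c ⬝ᵥ x)
  have hf : Continuous f := by fun_prop
  have hfK : ∀ x ∈ Set.Ici 0 ∩ Metric.sphere (0 : n → ℝ) 1, 0 < f x := by
    rintro x ⟨hx₀, hx₁⟩
    have hx : x ≠ 0 := by rintro rfl; simp at hx₁
    by_cases hBx : B *ᵥ x = 0
    · exact lt_max_of_lt_right (hc x hx₀ hx hBx)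
    · exact lt_max_of_lt_left (norm_pos_iff.mpr hBx)
  obtain ⟨μ, hμ, hμK⟩ :=
    ((isCompact_sphere 0 1).inter_left isClosed_Ici).exists_forall_le' hf.continuousOn hfK
  refine ⟨μ, hμ, fun x hx => ?_⟩
  rcases eq_or_ne x 0 with rfl | hx₀
  · simp
  have hnx : 0 < ‖x‖ := norm_pos_iff.mpr hx₀
  have hscale : f (‖x‖⁻¹ • x) = ‖x‖⁻¹ * f x := by
    simp only [f, mulVec_smul, norm_smul, dotProduct_smul, smul_eq_mul, norm_inv, norm_norm]
    exact (mul_max_of_nonneg _ _ (inv_nonneg.mpr hnx.le)).symm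
  have := hμK (‖x‖⁻¹ • x)
    ⟨smul_nonneg (inv_nonneg.mpr hnx.le) hx, by simp [norm_smul, hnx.ne']⟩
  rwa [hscale, le_inv_mul_iff₀ hnx, mul_comm] at this

section LinearProgram

variable {d n : ℕ} {A : Matrix (Fin d) (Fin n) ℤ} {c : Fin n → ℝ} {b : Fin d → ℝ}

theorem feas_iff {x : Fin n → ℝ} : feas A b x ↔ 0 ≤ x ∧ A.map (↑) *ᵥ x = b :=
  and_congr Iff.rfl funext_iff.symm

theorem exists_lpOpt (hc : ∀ x, 0 ≤ x → x ≠ 0 → A.map (↑) *ᵥ x = 0 → 0 < c ⬝ᵥ x)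
    {x₀ : Fin n → ℝ} (h₀ : feas A b x₀) : ∃ x, lpOpt A c b x := by
  obtain ⟨μ, hμ, hbound⟩ := exists_pos_mul_norm_le_max _ c hc
  set S := {x | feas A b x ∧ c ⬝ᵥ x ≤ c ⬝ᵥ x₀}
  have hS : IsCompact S := by
    refine (isCompact_closedBall 0 (max ‖b‖ (c ⬝ᵥ x₀) / μ)).of_isClosed_subset ?_ ?_
    · simp only [S, feas_iff, Set.ofPred_and]
      exact (isClosed_Ici.inter (isClosed_eq (by fun_prop) continuous_const)).inter
        (isClosed_le (by fun_prop) continuous_const)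
    · rintro x ⟨hx, hcx⟩
      obtain ⟨hx₀, hAx⟩ := feas_iff.mp hx
      rw [mem_closedBall_zero_iff, le_div_iff₀ hμ, mul_comm]
      simpa [hAx] using (hbound x hx₀).trans (max_le_max le_rfl hcx)
  obtain ⟨x, hxS, hmin⟩ :=
    hS.exists_isMinOn ⟨x₀, h₀, le_rfl⟩ (by fun_prop : Continuous (c ⬝ᵥ ·)).continuousOn
  refine ⟨x, hxS.1, fun y hy => ?_⟩
  by_cases hy₀ : c ⬝ᵥ y ≤ c ⬝ᵥ x₀
  · exact hmin ⟨hy, hy₀⟩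
  · exact hxS.2.trans (le_of_not_ge hy₀)

theorem lpOpt.dotProduct_nonneg {x : Fin n → ℝ} (hx : lpOpt A c b x) {t : Fin n → ℝ}
    (hAt : A.map (↑) *ᵥ t = 0) (htx : ∀ j, t j < 0 → 0 < x j) : 0 ≤ c ⬝ᵥ t := by
  obtain ⟨hx₀, hAx⟩ := feas_iff.mp hx.1
  obtain ⟨ε, hε, hnn⟩ := exists_pos_add_smul_nonneg hx₀ htx
  have : c ⬝ᵥ x ≤ c ⬝ᵥ (x + ε • t) :=
    hx.2 _ (feas_iff.mpr ⟨hnn, by rw [mulVec_add, mulVec_smul, hAt, hAx, smul_zero, add_zero]⟩)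
  rw [dotProduct_add, dotProduct_smul, smul_eq_mul, le_add_iff_nonneg_right] at this
  exact nonneg_of_mul_nonneg_right this hε

theorem lpOpt.midpoint {x y : Fin n → ℝ} (hx : lpOpt A c b x) (hy : lpOpt A c b y) :
    lpOpt A c b (midpoint ℝ x y) := by
  obtain ⟨hx₀, hAx⟩ := feas_iff.mp hx.1
  obtain ⟨hy₀, hAy⟩ := feas_iff.mp hy.1
  have hcxy : c ⬝ᵥ x = c ⬝ᵥ y := le_antisymm (hx.2 y hy.1) (hy.2 x hx.1)
  rw [midpoint_eq_smul_add]
  refine ⟨feas_iff.mpr ⟨smul_nonneg (by norm_num) (add_nonneg hx₀ hy₀), ?_⟩, fun w hw => ?_⟩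
  · rw [mulVec_smul, mulVec_add, hAx, hAy, ← two_smul ℝ b, smul_smul]
    norm_num
  · have : c ⬝ᵥ x ≤ c ⬝ᵥ w := hx.2 w hw
    change c ⬝ᵥ _ ≤ c ⬝ᵥ w
    rw [dotProduct_smul, dotProduct_add, ← hcxy, smul_eq_mul, invOf_eq_inv]
    linarith

end LinearProgram

def IPGeneric {d n : ℕ} (A : Matrix (Fin d) (Fin n) ℤ) (c : Fin n → ℝ) : Prop :=
  ∀ u₀ : Fin n → ℕ, ∃! u : Fin n → ℕ, intOpt A c (fun i => ∑ j, A i j * (u₀ j : ℤ)) u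

namespace IPGeneric

variable {d n : ℕ} {A : Matrix (Fin d) (Fin n) ℤ} {c : Fin n → ℝ} (hgen : IPGeneric A c)
include hgen

theorem exists_fiber_strictMin {u₀ : Fin n → ℤ} (hu₀ : 0 ≤ u₀) :
    ∃ u, 0 ≤ u ∧ A *ᵥ u = A *ᵥ u₀ ∧ ∀ u', 0 ≤ u' → A *ᵥ u' = A *ᵥ u₀ → u' ≠ u →
      c ⬝ᵥ (Int.cast ∘ u) < c ⬝ᵥ (Int.cast ∘ u') := by
  lift u₀ to Fin n → ℕ using hu₀
  obtain ⟨u, hu, huniq⟩ := hgen u₀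
  refine ⟨Nat.cast ∘ u, fun j => Int.natCast_nonneg _, funext hu.1, fun u' hu' hAu' hne => ?_⟩
  lift u' to Fin n → ℕ using hu'
  refine lt_of_not_ge fun hle => hne ?_
  simp only [dotProduct, Function.comp_apply, Int.cast_natCast] at hle
  rw [huniq u' ⟨funext_iff.mp hAu', fun u'' hu'' => hle.trans (hu.2 u'' hu'')⟩]
  rfl

theorem dotProduct_intCast_pos {v : Fin n → ℤ} (hv : 0 ≤ v) (hv₀ : v ≠ 0) (hAv : A *ᵥ v = 0) :
    0 < c ⬝ᵥ (Int.cast ∘ v) := by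
  obtain ⟨u, hu, hAu, hlt⟩ := hgen.exists_fiber_strictMin (le_refl 0)
  have := hlt (u + v) (add_nonneg hu hv) (by rw [mulVec_add, hAu, hAv, add_zero])
    (by simpa using hv₀)
  rwa [show (Int.cast ∘ (u + v) : Fin n → ℝ) = Int.cast ∘ u + Int.cast ∘ v from
    funext fun j => Int.cast_add (u j) (v j), dotProduct_add, lt_add_iff_pos_right] at this

theorem exists_dotProduct_intCast_neg {v : Fin n → ℤ} (hv₀ : v ≠ 0) (hAv : A *ᵥ v = 0) :
    ∃ t : Fin n → ℤ, A *ᵥ t = 0 ∧ c ⬝ᵥ (Int.cast ∘ t) < 0 ∧ ∀ j, t j < 0 → v j ≠ 0 := by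
  obtain ⟨u, hu, hAu, hlt⟩ := hgen.exists_fiber_strictMin (posPart_nonneg v)
  -- `v⁺` and `v⁻` are distinct points of the same fiber, so one of them is not its optimum
  obtain ⟨w, hw, hAw, hwu, hwv⟩ : ∃ w, 0 ≤ w ∧ A *ᵥ w = A *ᵥ v⁺ ∧ w ≠ u ∧
      ∀ j, w j ≠ 0 → v j ≠ 0 := by
    by_cases hvu : v⁺ = u
    · refine ⟨v⁻, negPart_nonneg v, ?_, fun h => hv₀ ?_, fun j hj hvj => hj ?_⟩
      · rw [← sub_eq_zero, ← mulVec_sub, negPart_sub_posPart, mulVec_neg, hAv, neg_zero]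
      · rw [← posPart_sub_negPart v, hvu, h, sub_self]
      · simp [hvj]
    · exact ⟨v⁺, posPart_nonneg v, rfl, hvu, fun j hj hvj => hj (by simp [hvj])⟩
  refine ⟨u - w, by rw [mulVec_sub, hAu, hAw, sub_self], ?_, fun j hj => hwv j ?_⟩
  · rw [show (Int.cast ∘ (u - w) : Fin n → ℝ) = Int.cast ∘ u - Int.cast ∘ w from
      funext fun j => Int.cast_sub (u j) (w j), dotProduct_sub, sub_neg]
    exact hlt w hw hAw hwu
  · exact ((hu j).trans_lt (sub_neg.mp hj)).ne'

theorem exists_dotProduct_neg {w : Fin n → ℝ} (hw₀ : w ≠ 0) (hAw : A.map (↑) *ᵥ w = 0) :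
    ∃ t : Fin n → ℝ, A.map (↑) *ᵥ t = 0 ∧ c ⬝ᵥ t < 0 ∧ ∀ j, t j < 0 → w j ≠ 0 := by
  obtain ⟨v, hv₀, hAv, hvw⟩ := A.exists_int_mulVec_eq_zero_support_subset hw₀ hAw
  obtain ⟨t, hAt, hct, htv⟩ := hgen.exists_dotProduct_intCast_neg hv₀ hAv
  exact ⟨Int.cast ∘ t, map_intCast_mulVec_eq_zero hAt, hct,
    fun j hj => hvw (htv j (Int.cast_lt_zero.mp hj))⟩

theorem dotProduct_pos_or_exists_support_ssubset {w : Fin n → ℝ} (hw : 0 ≤ w) (hw₀ : w ≠ 0)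
    (hAw : A.map (↑) *ᵥ w = 0) :
    0 < c ⬝ᵥ w ∨ ∃ w', 0 ≤ w' ∧ w' ≠ 0 ∧ A.map (↑) *ᵥ w' = 0 ∧ c ⬝ᵥ w' ≤ c ⬝ᵥ w ∧
      Function.support w' ⊂ Function.support w := by
  obtain ⟨v, hv₀, hAv, hvw⟩ := A.exists_int_mulVec_eq_zero_support_subset hw₀ hAw
  obtain ⟨u, hu₀, hAu, huw, hcu⟩ : ∃ u : Fin n → ℤ, u ≠ 0 ∧ A *ᵥ u = 0 ∧
      Function.support u ⊆ Function.support w ∧ c ⬝ᵥ (Int.cast ∘ u) ≤ 0 := by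
    rcases le_total (c ⬝ᵥ (Int.cast ∘ v)) 0 with h | h
    · exact ⟨v, hv₀, hAv, hvw, h⟩
    · refine ⟨-v, neg_ne_zero.mpr hv₀, by rw [mulVec_neg, hAv, neg_zero], by simpa using hvw, ?_⟩
      simpa [dotProduct] using h
  obtain ⟨j, hj⟩ : ∃ j, u j < 0 := by
    by_contra! h
    exact (hcu.trans_lt (hgen.dotProduct_intCast_pos h hu₀ hAu)).false
  obtain ⟨ε, hε, hnn, hss⟩ := exists_pos_add_smul_nonneg_support_ssubset hw
    (u := Int.cast ∘ u) (fun j hj => huw (by simpa using hj)) ⟨j, Int.cast_lt_zero.mpr hj⟩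
  by_cases hw' : w + ε • (Int.cast ∘ u) = 0
  · left
    have hwu : w = ε • (Int.cast ∘ (-u)) := by
      rw [eq_neg_of_add_eq_zero_left hw']
      ext j
      simp
    have hnu : 0 ≤ -u := fun j => by
      have h := hw j
      rw [hwu, Pi.smul_apply, smul_eq_mul, Function.comp_apply] at h
      exact Int.cast_nonneg_iff.mp (nonneg_of_mul_nonneg_right h hε)
    rw [hwu, dotProduct_smul, smul_eq_mul]
    exact mul_pos hε (hgen.dotProduct_intCast_pos hnu (neg_ne_zero.mpr hu₀)
      (by rw [mulVec_neg, hAu, neg_zero]))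
  · refine .inr ⟨_, hnn, hw', ?_, ?_, hss⟩
    · rw [mulVec_add, mulVec_smul, hAw, map_intCast_mulVec_eq_zero hAu, smul_zero, add_zero]
    · rw [dotProduct_add, dotProduct_smul, smul_eq_mul, add_le_iff_nonpos_right]
      exact mul_nonpos_of_nonneg_of_nonpos hε.le hcu

theorem dotProduct_pos {w : Fin n → ℝ} (hw : 0 ≤ w) (hw₀ : w ≠ 0) (hAw : A.map (↑) *ᵥ w = 0) :
    0 < c ⬝ᵥ w := by
  induction hk : (Function.support w).ncard using Nat.strong_induction_on generalizing w with
  | _ k ih =>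
  rcases hgen.dotProduct_pos_or_exists_support_ssubset hw hw₀ hAw with
    h | ⟨w', hw', hw'₀, hAw', hcw', hss⟩
  · exact h
  · exact (ih _ (hk ▸ Set.ncard_lt_ncard hss) hw' hw'₀ hAw' rfl).trans_le hcw'

theorem lpOpt_unique {b : Fin d → ℝ} {x y : Fin n → ℝ} (hx : lpOpt A c b x)
    (hy : lpOpt A c b y) : x = y := by
  by_contra hne
  obtain ⟨t, hAt, hct, htxy⟩ := hgen.exists_dotProduct_neg (sub_ne_zero.mpr hne)
    (by rw [mulVec_sub, (feas_iff.mp hx.1).2, (feas_iff.mp hy.1).2, sub_self])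
  refine hct.not_ge ((hx.midpoint hy).dotProduct_nonneg hAt fun j hj => ?_)
  have hxj : 0 ≤ x j := hx.1.1 j
  have hyj : 0 ≤ y j := hy.1.1 j
  rcases (sub_ne_zero.mp (htxy j hj)).lt_or_gt with h | h <;>
    simp [midpoint_eq_smul_add] <;> linarith

theorem linearIndependent_of_isCell {σ : Finset (Fin n)} (hσ : isCell A c σ) :
    LinearIndependent ℝ (fun j : {j : Fin n // j ∈ σ} => fun i => (A i j.1 : ℝ)) := by
  classical
  obtain ⟨z, hzσ, hzlt⟩ := hσ
  change LinearIndepOn ℝ (fun j i => (A i j : ℝ)) (σ : Set (Fin n))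
  rw [linearIndepOn_finset_iff]
  intro g hg j hj
  by_contra hgj
  set w : Fin n → ℝ := fun j => if j ∈ σ then g j else 0
  have hw₀ : w ≠ 0 := fun h => hgj (by simpa [w, hj] using congrFun h j)
  have hAw : A.map (↑) *ᵥ w = 0 := by
    ext i
    simpa [w, mulVec, dotProduct, mul_comm] using congrFun hg i
  obtain ⟨t, hAt, hct, htw⟩ := hgen.exists_dotProduct_neg hw₀ hAw
  have hslack : c ⬝ᵥ t = (c - z ᵥ* A.map (↑)) ⬝ᵥ t := by
    rw [sub_dotProduct, ← dotProduct_mulVec, hAt, dotProduct_zero, sub_zero]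
  refine hct.not_ge (hslack ▸ Finset.sum_nonneg fun k _ => ?_)
  by_cases hk : k ∈ σ
  · rw [Pi.sub_apply, show (z ᵥ* A.map (↑)) k = c k from hzσ k hk, sub_self, zero_mul]
  · exact mul_nonneg (sub_nonneg.mpr (hzlt k hk).le)
      (not_lt.mp fun h => htw k h (by simp [w, hk]))

end IPGeneric

theorem stmt15_general {d n : ℕ} (A : Matrix (Fin d) (Fin n) ℤ) (c : Fin n → ℝ)
    -- c is generic: every feasible IP has a unique optimal solution
    (hgen : ∀ u0 : Fin n → ℕ,
      ∃! u : Fin n → ℕ, intOpt A c (fun i => ∑ j, A i j * (u0 j : ℤ)) u) :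
    (∀ b : Fin d → ℝ, (∃ x, feas A b x) → ∃! x, lpOpt A c b x) ∧
    ∀ σ : Finset (Fin n), isCell A c σ →
      LinearIndependent ℝ (fun j : {j : Fin n // j ∈ σ} => (fun i => (A i j.1 : ℝ))) := by
  have hgen : IPGeneric A c := hgen
  refine ⟨fun b ⟨x₀, h₀⟩ => ?_, fun σ hσ => hgen.linearIndependent_of_isCell hσ⟩
  obtain ⟨x, hx⟩ := exists_lpOpt (fun w hw hw₀ hAw => hgen.dotProduct_pos hw hw₀ hAw) h₀
  exact ⟨x, hx, fun y hy => hgen.lpOpt_unique hy hx⟩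

theorem stmt15 {d n : ℕ} (A : Matrix (Fin d) (Fin n) ℤ) (c : Fin n → ℝ)
    (hlat : ∀ v : Fin d → ℤ, ∃ u : Fin n → ℤ, ∀ i, ∑ j, A i j * u j = v i)
    -- c is generic: every feasible IP has a unique optimal solution
    (hgen : ∀ u0 : Fin n → ℕ,
      ∃! u : Fin n → ℕ, intOpt A c (fun i => ∑ j, A i j * (u0 j : ℤ)) u) :
    (∀ b : Fin d → ℝ, (∃ x, feas A b x) → ∃! x, lpOpt A c b x) ∧
    ∀ σ : Finset (Fin n), isCell A c σ →
      LinearIndependent ℝ (fun j : {j : Fin n // j ∈ σ} => (fun i => (A i j.1 : ℝ))) :=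
  stmt15_general A c hgen
end

section
/- Let A ∈ Z^{d×n} with rank d and ZA = Z^d, c ∈ R^n with Q_c = {y : yA ≤ c} nonempty, and suppose A is a Hilbert basis (NA = cone(A) ∩ Z^d). Suppose there exists a finite set T of integer vectors t = t^+ − t^− with At = 0, c·t > 0 and t^+ ∈ {0,1}^n, such that for every D ∈ N, b ∈ NA, and feasible non-optimal ω of IP_{A,c}(b), some t ∈ T satisfies ω − t ≥ 0. Then for every b ∈ cone(A) ∩ Z^d, the optimal value of min{c·x : Ax = b, x ∈ N^n} equals the optimal value of min{c·x : Ax = b, x ≥ 0}. -/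
open Finset Filter Topology Matrix

theorem exists_le_of_forall_lt_exists_le_sub {α : Type*} {P : α → Prop} {f : α → ℝ} {L δ : ℝ}
    (hδ : 0 < δ) (hstep : ∀ a, P a → L < f a → ∃ a', P a' ∧ f a' ≤ f a - δ) {a : α} (ha : P a) :
    ∃ a', P a' ∧ f a' ≤ L := by
  obtain ⟨N, hN⟩ := exists_nat_gt ((f a - L) / δ)
  rw [div_lt_iff₀ hδ] at hN
  induction N generalizing a with
  | zero => exact ⟨a, ha, by simp at hN; linarith⟩
  | succ N ih =>
    by_cases h : f a ≤ L
    · exact ⟨a, ha, h⟩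
    obtain ⟨a', ha', hfa'⟩ := hstep a ha (not_le.1 h)
    exact ih ha' (by push_cast at hN; linarith)

theorem Finset.exists_pos_forall_le {ι : Type*} (s : Finset ι) {f : ι → ℝ}
    (hf : ∀ i ∈ s, 0 < f i) : ∃ δ > 0, ∀ i ∈ s, δ ≤ f i := by
  rcases s.eq_empty_or_nonempty with rfl | hs
  · exact ⟨1, one_pos, by simp⟩
  · obtain ⟨i, hi, hmin⟩ := s.exists_min_image f hs
    exact ⟨f i, hf i hi, hmin⟩

-- In a ℚ-basis of `span ℚ {1, x j}`, moving the basis vectors to nearby rationals moves `x` to a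
-- nearby rational point satisfying every rational affine relation that `x` satisfies.
theorem exists_rat_near_of_rat_relations {ι : Type*} [Fintype ι] (x : ι → ℝ)
    {U : Set (ι → ℝ)} (hU : U ∈ 𝓝 x) :
    ∃ q : ι → ℚ, (fun j => (q j : ℝ)) ∈ U ∧
      ∀ (a : ι → ℚ) (r : ℚ), ∑ j, (a j : ℝ) * x j = r → ∑ j, a j * q j = r := by
  let V := Submodule.span ℚ (insert (1 : ℝ) (Set.range x))
  have : Module.Finite ℚ V :=
    Module.Finite.span_of_finite ℚ ((Set.finite_range x).insert 1)
  let B := Module.finBasis ℚ V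
  let one : V := ⟨1, Submodule.subset_span (Set.mem_insert _ _)⟩
  let xv : ι → V := fun j => ⟨x j, Submodule.subset_span (Set.mem_insert_of_mem _ ⟨j, rfl⟩)⟩
  -- `ψ s` is the ℚ-linear map `V → ℝ` sending `B i` to `s i`
  let ψ : (Fin _ → ℝ) → V → ℝ := fun s w => ∑ i, (B.equivFun w i : ℝ) * s i
  have hψ_basis : ∀ w, ψ (fun i => (B i : ℝ)) w = w := fun w => by
    have h := congrArg Subtype.val (B.sum_equivFun w)
    rw [Submodule.coe_sum] at h
    simpa only [Submodule.coe_smul, Rat.smul_def] using h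
  have hψ_cont : ∀ w, Continuous fun s => ψ s w := fun w =>
    continuous_finsetSum _ fun i _ => continuous_const.mul (continuous_apply i)
  let F : (Fin _ → ℝ) → ι → ℝ := fun s j => ψ s (xv j) / ψ s one
  have hden : ψ (fun i => (B i : ℝ)) one ≠ 0 := by simp [hψ_basis, one]
  have hF : ContinuousAt F (fun i => (B i : ℝ)) :=
    continuousAt_pi.2 fun j => (hψ_cont _).continuousAt.div (hψ_cont one).continuousAt hden
  have hFx : F (fun i => (B i : ℝ)) = x := by
    funext j; simp [F, hψ_basis, one, xv]
  have hnhds : {s | F s ∈ U ∧ ψ s one ≠ 0} ∈ 𝓝 (fun i => (B i : ℝ)) :=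
    Filter.inter_mem (hF.preimage_mem_nhds (hFx ▸ hU))
      ((hψ_cont one).continuousAt.eventually_ne hden)
  obtain ⟨s, hsU, hs0⟩ := (DenseRange.piMap fun _ => Rat.denseRange_cast).mem_nhds hnhds
  let φ : V →ₗ[ℚ] ℚ := B.constr ℚ s
  have hφ : ∀ w, (φ w : ℝ) = ψ (Pi.map (fun _ => ((↑) : ℚ → ℝ)) s) w := fun w => by
    simp [φ, ψ, Module.Basis.constr_apply_fintype]
  have hφ0 : φ one ≠ 0 := by exact_mod_cast (hφ one).symm ▸ hs0
  refine ⟨fun j => φ (xv j) / φ one, ?_, fun a r hr => ?_⟩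
  · convert hsU using 1; funext j; push_cast; rw [hφ, hφ]
  · have hrel : ∑ j, a j • xv j = r • one :=
      Subtype.ext (by simpa [Rat.smul_def, one, xv] using hr)
    have := congrArg φ hrel
    simp only [map_sum, map_smul, smul_eq_mul] at this
    simp_rw [mul_div_assoc', ← Finset.sum_div, this, mul_div_cancel_right₀ _ hφ0]

theorem exists_pos_nat_mul_eq_natCast {ι : Type*} [Fintype ι] {q : ι → ℚ} (hq : 0 ≤ q) :
    ∃ D : ℕ, 0 < D ∧ ∃ α : ι → ℕ, ∀ j, (α j : ℚ) = D * q j := by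
  classical
  refine ⟨∏ j, (q j).den, Finset.prod_pos fun j _ => (q j).den_pos, ?_⟩
  have hint : ∀ j, ∃ a : ℕ, (a : ℚ) = (∏ k, (q k).den : ℕ) * q j := fun j => by
    have hz : 0 ≤ (∏ k ∈ univ.erase j, ((q k).den : ℤ)) * (q j).num :=
      mul_nonneg (by positivity) (Rat.num_nonneg.2 (hq j))
    refine ⟨((∏ k ∈ univ.erase j, ((q k).den : ℤ)) * (q j).num).toNat, ?_⟩
    rw [← Int.cast_natCast, Int.toNat_of_nonneg hz, ← Finset.prod_erase_mul _ _ (mem_univ j)]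
    push_cast
    rw [mul_assoc, Rat.den_mul_eq_num]
  choose α hα using hint
  exact ⟨α, hα⟩

variable {d n : ℕ} (A : Matrix (Fin d) (Fin n) ℤ) (c : Fin n → ℝ)

theorem dotProduct_le_of_feas {y : Fin d → ℝ} (hy : ∀ j, ∑ i, y i * (A i j : ℝ) ≤ c j)
    {b : Fin d → ℝ} {x : Fin n → ℝ} (hx : feas A b x) : y ⬝ᵥ b ≤ c ⬝ᵥ x := by
  obtain ⟨hx0, hxA⟩ := hx
  calc y ⬝ᵥ b = ∑ j, (∑ i, y i * (A i j : ℝ)) * x j := by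
        simp only [dotProduct, ← hxA, Finset.mul_sum, Finset.sum_mul]
        rw [Finset.sum_comm]
        simp only [mul_assoc]
    _ ≤ c ⬝ᵥ x := Finset.sum_le_sum fun j _ => mul_le_mul_of_nonneg_right (hy j) (hx0 j)

theorem feas_natCast {b : Fin d → ℤ} {u : Fin n → ℕ} (hu : A *ᵥ ((↑) ∘ u) = b) :
    feas A (fun i => (b i : ℝ)) ((↑) ∘ u) :=
  ⟨fun j => (u j).cast_nonneg, fun i => by
    simpa [mulVec, dotProduct] using congrArg (Int.cast (R := ℝ)) (congrFun hu i)⟩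

theorem exists_rat_solution_lt_of_feas {b : Fin d → ℤ} {x : Fin n → ℝ}
    (hx : feas A (fun i => (b i : ℝ)) x) {γ : ℝ} (hγ : c ⬝ᵥ x < γ) :
    ∃ q : Fin n → ℚ, 0 ≤ q ∧ A.map (↑) *ᵥ q = (↑) ∘ b ∧ c ⬝ᵥ ((↑) ∘ q) < γ := by
  obtain ⟨hx0, hxA⟩ := hx
  -- positive coordinates stay positive near `x`; zero ones stay zero by the relations `x j = 0`
  have hU : {z : Fin n → ℝ | (∀ j, 0 < x j → 0 < z j) ∧ c ⬝ᵥ z < γ} ∈ 𝓝 x := by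
    refine inter_mem (eventually_all.2 fun j => ?_) ?_
    · by_cases h : 0 < x j
      · filter_upwards [continuousAt_const.eventually_lt (continuous_apply j).continuousAt h]
          with z hz using fun _ => hz
      · exact .of_forall fun _ h' => absurd h' h
    · exact (isOpen_lt (continuous_const.dotProduct continuous_id) continuous_const).mem_nhds hγ
  obtain ⟨q, ⟨hqpos, hqc⟩, hq⟩ := exists_rat_near_of_rat_relations x hU
  refine ⟨q, fun j => ?_, funext fun i => ?_, hqc⟩
  · rcases (hx0 j).eq_or_lt with h | h
    · have hqj := hq (Pi.single j 1) 0 (by simp [Pi.single_apply, apply_ite, ← h])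
      simpa [Pi.single_apply] using hqj.ge
    · exact (Rat.cast_pos.1 (hqpos j h)).le
  · simpa [mulVec, dotProduct] using hq (fun j => A i j) (b i) (by simpa using hxA i)

theorem exists_nat_lt_nsmul_of_rat {b : Fin d → ℤ} {ω : Fin n → ℕ} (hω : A *ᵥ ((↑) ∘ ω) = b)
    {q : Fin n → ℚ} (hq0 : 0 ≤ q) (hqA : A.map (↑) *ᵥ q = (↑) ∘ b)
    (hqc : c ⬝ᵥ ((↑) ∘ q) < c ⬝ᵥ ((↑) ∘ ω)) :
    ∃ D : ℕ, ∃ α : Fin n → ℕ, A *ᵥ ((↑) ∘ α) = A *ᵥ ((↑) ∘ (D • ω)) ∧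
      c ⬝ᵥ ((↑) ∘ α) < c ⬝ᵥ ((↑) ∘ (D • ω)) := by
  obtain ⟨D, hD, α, hα⟩ := exists_pos_nat_mul_eq_natCast hq0
  refine ⟨D, α, funext fun i => Int.cast_injective (α := ℚ) ?_, ?_⟩
  · have hi := congrFun hqA i
    rw [← hω] at hi
    simp only [mulVec, dotProduct, Matrix.map_apply, Function.comp_apply] at hi ⊢
    push_cast at hi ⊢
    calc ∑ j, (A i j : ℚ) * (α j : ℚ) = D * ∑ j, (A i j : ℚ) * q j := by
          rw [mul_sum]; exact sum_congr rfl fun j _ => by rw [hα]; ring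
      _ = ∑ j, (A i j : ℚ) * ((D • ω) j : ℕ) := by
          rw [hi, mul_sum]
          exact sum_congr rfl fun j _ => by
            simp only [Pi.smul_apply, smul_eq_mul, Nat.cast_mul]; ring
  · have hαR : ∀ j, (α j : ℝ) = D * (q j : ℝ) := fun j => by exact_mod_cast hα j
    have hD' : (0 : ℝ) < D := by exact_mod_cast hD
    simp only [dotProduct, Function.comp_apply, hαR, Pi.smul_apply, smul_eq_mul, Nat.cast_mul]
      at hqc ⊢
    calc ∑ j, c j * (D * (q j : ℝ)) = D * ∑ j, c j * q j := by
          rw [mul_sum]; exact sum_congr rfl fun j _ => by ring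
      _ < D * ∑ j, c j * ω j := mul_lt_mul_of_pos_left hqc hD'
      _ = ∑ j, c j * (D * ω j) := by rw [mul_sum]; exact sum_congr rfl fun j _ => by ring

theorem exists_test_le_of_feas_lt (T : Finset (Fin n → ℤ)) (hT : ∀ t ∈ T, ∀ j, t j ≤ 1)
    (hTest : ∀ ω ω' : Fin n → ℕ, A *ᵥ ((↑) ∘ ω') = A *ᵥ ((↑) ∘ ω) →
      c ⬝ᵥ ((↑) ∘ ω') < c ⬝ᵥ ((↑) ∘ ω) → ∃ t ∈ T, ∀ j, t j ≤ ω j)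
    {b : Fin d → ℤ} {ω : Fin n → ℕ} (hω : A *ᵥ ((↑) ∘ ω) = b) {x : Fin n → ℝ}
    (hx : feas A (fun i => (b i : ℝ)) x) (hxω : c ⬝ᵥ x < c ⬝ᵥ ((↑) ∘ ω)) :
    ∃ t ∈ T, ∀ j, t j ≤ ω j := by
  obtain ⟨q, hq0, hqA, hqc⟩ := exists_rat_solution_lt_of_feas A c hx hxω
  obtain ⟨D, α, hαA, hαc⟩ := exists_nat_lt_nsmul_of_rat A c hω hq0 hqA hqc
  obtain ⟨t, ht, htD⟩ := hTest (D • ω) α hαA hαc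
  -- `t ≤ D ω` and `t ≤ 1` force `t ≤ ω`: if `ω j = 0` then `t j ≤ 0`, else `t j ≤ 1 ≤ ω j`
  refine ⟨t, ht, fun j => ?_⟩
  have h1 := hT t ht j
  have hDω := htD j
  rcases Nat.eq_zero_or_pos (ω j) with h | h
  · simpa [h] using hDω
  · omega

theorem exists_sub_test_of_feas_lt (T : Finset (Fin n → ℤ))
    (hT : ∀ t ∈ T, A *ᵥ t = 0 ∧ ∀ j, t j ≤ 1)
    (hTest : ∀ ω ω' : Fin n → ℕ, A *ᵥ ((↑) ∘ ω') = A *ᵥ ((↑) ∘ ω) →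
      c ⬝ᵥ ((↑) ∘ ω') < c ⬝ᵥ ((↑) ∘ ω) → ∃ t ∈ T, ∀ j, t j ≤ ω j)
    {b : Fin d → ℤ} {ω : Fin n → ℕ} (hω : A *ᵥ ((↑) ∘ ω) = b) {x : Fin n → ℝ}
    (hx : feas A (fun i => (b i : ℝ)) x) (hxω : c ⬝ᵥ x < c ⬝ᵥ ((↑) ∘ ω)) :
    ∃ t ∈ T, ∃ ω' : Fin n → ℕ, A *ᵥ ((↑) ∘ ω') = b ∧
      c ⬝ᵥ ((↑) ∘ ω') = c ⬝ᵥ ((↑) ∘ ω) - c ⬝ᵥ ((↑) ∘ t) := by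
  obtain ⟨t, ht, htω⟩ := exists_test_le_of_feas_lt A c T (fun t ht => (hT t ht).2) hTest hω hx hxω
  obtain ⟨ω', hω'⟩ : ∃ ω' : Fin n → ℕ, ∀ j, (ω' j : ℤ) = ω j - t j :=
    ⟨fun j => (ω j - t j).toNat, fun j => Int.toNat_of_nonneg (sub_nonneg.2 (htω j))⟩
  have hω'Z : ((↑) ∘ ω' : Fin n → ℤ) = Nat.cast ∘ ω - t := funext hω'
  have hω'R : ((↑) ∘ ω' : Fin n → ℝ) = Nat.cast ∘ ω - Int.cast ∘ t :=
    funext fun j => by simp only [Function.comp_apply, Pi.sub_apply]; exact_mod_cast hω' j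
  refine ⟨t, ht, ω', by rw [hω'Z, mulVec_sub, (hT t ht).1, sub_zero, hω], ?_⟩
  rw [hω'R, dotProduct_sub]

theorem stmt18_general {d n : ℕ} (A : Matrix (Fin d) (Fin n) ℤ) (c : Fin n → ℝ)
    (hQ : ∃ y : Fin d → ℝ, ∀ j, ∑ i, y i * (A i j : ℝ) ≤ c j)
    -- A is a Hilbert basis
    (hHilb : ∀ b : Fin d → ℤ, (∃ x, feas A (fun i => (b i : ℝ)) x) →
      ∃ u : Fin n → ℕ, ∀ i, ∑ j, A i j * (u j : ℤ) = b i)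
    -- a finite test-set with 0-1 positive parts
    (T : Finset (Fin n → ℤ))
    (hT : ∀ t ∈ T, (∀ i, ∑ j, A i j * t j = 0) ∧ (0 < ∑ j, c j * (t j : ℝ)) ∧ ∀ j, t j ≤ 1)
    (hTest : ∀ u0 : Fin n → ℕ, ∀ ω : Fin n → ℕ,
      (∀ i, ∑ j, A i j * (ω j : ℤ) = ∑ j, A i j * (u0 j : ℤ)) →
      (∃ ω' : Fin n → ℕ, (∀ i, ∑ j, A i j * (ω' j : ℤ) = ∑ j, A i j * (ω j : ℤ)) ∧
        ∑ j, c j * (ω' j : ℝ) < ∑ j, c j * (ω j : ℝ)) →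
      ∃ t ∈ T, ∀ j, t j ≤ (ω j : ℤ)) :
    ∀ b : Fin d → ℤ, (∃ x, feas A (fun i => (b i : ℝ)) x) →
      sInf {v : ℝ | ∃ u : Fin n → ℕ, (∀ i, ∑ j, A i j * (u j : ℤ) = b i) ∧
        v = ∑ j, c j * (u j : ℝ)} =
      sInf {v : ℝ | ∃ x, feas A (fun i => (b i : ℝ)) x ∧ v = ∑ j, c j * x j} := by
  intro b hb
  obtain ⟨y, hy⟩ := hQ
  obtain ⟨u₀, hu₀⟩ := hHilb b hb
  set LP := {v : ℝ | ∃ x, feas A (fun i => (b i : ℝ)) x ∧ v = ∑ j, c j * x j}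
  have hsub : {v : ℝ | ∃ u : Fin n → ℕ, (∀ i, ∑ j, A i j * (u j : ℤ) = b i) ∧
      v = ∑ j, c j * (u j : ℝ)} ⊆ LP := by
    rintro _ ⟨u, hu, rfl⟩
    exact ⟨_, feas_natCast A (funext hu), rfl⟩
  have hLP : BddBelow LP := ⟨_, by rintro _ ⟨x, hx, rfl⟩; exact dotProduct_le_of_feas A c hy hx⟩
  obtain ⟨δ, hδ, hδT⟩ := T.exists_pos_forall_le fun t ht => (hT t ht).2.1
  obtain ⟨ω, hω, hωL⟩ := exists_le_of_forall_lt_exists_le_sub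
    (P := fun ω : Fin n → ℕ => A *ᵥ ((↑) ∘ ω) = b) (f := fun ω : Fin n → ℕ => c ⬝ᵥ ((↑) ∘ ω))
    hδ (fun ω hω hωL => by
      obtain ⟨_, ⟨x, hx, rfl⟩, hxω⟩ := exists_lt_of_csInf_lt ⟨_, hsub ⟨u₀, hu₀, rfl⟩⟩ hωL
      obtain ⟨t, ht, ω', hω', hω'c⟩ := exists_sub_test_of_feas_lt A c T
        (fun t ht => ⟨funext (hT t ht).1, (hT t ht).2.2⟩)
        (fun ω ω' h h' => hTest ω ω (fun _ => rfl) ⟨ω', congrFun h, h'⟩) hω hx hxω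
      exact ⟨ω', hω', hω'c.le.trans (sub_le_sub_left (hδT t ht) _)⟩) (funext hu₀)
  exact le_antisymm ((csInf_le (hLP.mono hsub) ⟨ω, congrFun hω, rfl⟩).trans hωL)
    (csInf_le_csInf hLP ⟨_, u₀, hu₀, rfl⟩ hsub)

theorem stmt18 {d n : ℕ} (A : Matrix (Fin d) (Fin n) ℤ) (c : Fin n → ℝ)
    (hrank : A.rank = d)
    (hlat : ∀ v : Fin d → ℤ, ∃ u : Fin n → ℤ, ∀ i, ∑ j, A i j * u j = v i)
    (hQ : ∃ y : Fin d → ℝ, ∀ j, ∑ i, y i * (A i j : ℝ) ≤ c j)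
    -- A is a Hilbert basis
    (hHilb : ∀ b : Fin d → ℤ, (∃ x, feas A (fun i => (b i : ℝ)) x) →
      ∃ u : Fin n → ℕ, ∀ i, ∑ j, A i j * (u j : ℤ) = b i)
    -- a finite test-set with 0-1 positive parts
    (T : Finset (Fin n → ℤ))
    (hT : ∀ t ∈ T, (∀ i, ∑ j, A i j * t j = 0) ∧ (0 < ∑ j, c j * (t j : ℝ)) ∧ ∀ j, t j ≤ 1)
    (hTest : ∀ u0 : Fin n → ℕ, ∀ ω : Fin n → ℕ,
      (∀ i, ∑ j, A i j * (ω j : ℤ) = ∑ j, A i j * (u0 j : ℤ)) →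
      (∃ ω' : Fin n → ℕ, (∀ i, ∑ j, A i j * (ω' j : ℤ) = ∑ j, A i j * (ω j : ℤ)) ∧
        ∑ j, c j * (ω' j : ℝ) < ∑ j, c j * (ω j : ℝ)) →
      ∃ t ∈ T, ∀ j, t j ≤ (ω j : ℤ)) :
    ∀ b : Fin d → ℤ, (∃ x, feas A (fun i => (b i : ℝ)) x) →
      sInf {v : ℝ | ∃ u : Fin n → ℕ, (∀ i, ∑ j, A i j * (u j : ℤ) = b i) ∧
        v = ∑ j, c j * (u j : ℝ)} =
      sInf {v : ℝ | ∃ x, feas A (fun i => (b i : ℝ)) x ∧ v = ∑ j, c j * x j} :=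
  stmt18_general A c hQ hHilb T hT hTest
end
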